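/- arXiv:2405.14087 — 7 statements merged into one kernel-verified Lean document; each statement's English description precedes it below -/
import Mathlib

section
/- Let x_1, …, x_m ∈ ℝ^n \ {0}, a_1, …, a_m ∈ ℝ, and let K = { y ∈ ℝ^n | x_i · y + a_i ≤ 0 for all i }. If K is nonempty, then for every z ∈ ℝ^n, letting w be the unique nearest point of K to z, one has z ∈ {w} + Cone{ x_i | x_i · w + a_i = 0 }. -/
/-!
The nearest point `w` is characterised by `⟪z - w, y - w⟫ ≤ 0` for all `y ∈ K`. Moving from `w`
in a direction `d` with `⟪x i, d⟫ ≤ 0` for every active constraint stays in `K` for a short time,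
so `⟪z - w, d⟫ ≤ 0` for all such `d`: that is, `z - w` lies in the double dual of the cone `C`
generated by the active `x i`. By Farkas' lemma this double dual is `C` itself as soon as `C` is
closed, and finitely generated cones are closed: by Carathéodory's theorem for cones, `C` is a
finite union of cones over linearly independent vectors, each the injective linear image of a
closed orthant.
-/

open Filter Topology
open scoped RealInnerProductSpace

namespace PointedCone

section OrderedField

variable {𝕜 E : Type*} [Field 𝕜] [LinearOrder 𝕜] [IsStrictOrderedRing 𝕜]
  [AddCommGroup E] [Module 𝕜 E]

lemma mem_hull_finset_iff {s : Finset E} {v : E} :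
    v ∈ hull 𝕜 (s : Set E) ↔ ∃ c : E → 𝕜, (∀ y ∈ s, 0 ≤ c y) ∧ ∑ y ∈ s, c y • y = v := by
  classical
  rw [hull, Submodule.mem_span_finset]
  constructor
  · rintro ⟨f, -, rfl⟩
    exact ⟨fun y => f y, fun y _ => (f y).2, rfl⟩
  · rintro ⟨c, hc, rfl⟩
    refine ⟨fun y => if h : y ∈ s then ⟨c y, hc y h⟩ else 0,
      Function.support_subset_iff'.mpr fun y hy => dif_neg hy, ?_⟩
    refine Finset.sum_congr rfl fun y hy => ?_
    simp only [dif_pos hy, Nonneg.mk_smul]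

lemma exists_mem_hull_erase_of_not_linearIndepOn [DecidableEq E] {s : Finset E} {v : E}
    (hs : ¬LinearIndepOn 𝕜 id (s : Set E)) (hv : v ∈ hull 𝕜 (s : Set E)) :
    ∃ y₀ ∈ s, v ∈ hull 𝕜 ((s.erase y₀ : Finset E) : Set E) := by
  obtain ⟨g, hg, hpos⟩ : ∃ g : E → 𝕜, ∑ y ∈ s, g y • y = 0 ∧ ∃ y ∈ s, 0 < g y := by
    obtain ⟨g, hg, y, hys, hy⟩ := not_linearIndepOn_finset_iff.mp hs
    rcases hy.lt_or_gt with hneg | hpos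
    · exact ⟨-g, by simpa using hg, y, hys, by simpa using hneg⟩
    · exact ⟨g, hg, y, hys, hpos⟩
  obtain ⟨c, hc, rfl⟩ := mem_hull_finset_iff.mp hv
  -- move along the relation `g` until the first coefficient of `c` vanishes
  obtain ⟨y₀, hy₀, hmin⟩ := Finset.exists_min_image (s.filter fun y => 0 < g y)
    (fun y => c y / g y) (by simpa [Finset.filter_nonempty_iff] using hpos)
  rw [Finset.mem_filter] at hy₀
  set r := c y₀ / g y₀
  refine ⟨y₀, hy₀.1, mem_hull_finset_iff.mpr ⟨fun y => c y - r * g y, fun y hy => ?_, ?_⟩⟩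
  · have hys := Finset.mem_of_mem_erase hy
    rcases le_or_gt (g y) 0 with hgy | hgy
    · have : 0 ≤ r := div_nonneg (hc y₀ hy₀.1) hy₀.2.le
      nlinarith [hc y hys]
    · have := hmin y (Finset.mem_filter.mpr ⟨hys, hgy⟩)
      rw [le_div_iff₀ hgy] at this
      linarith
  · have hr : c y₀ - r * g y₀ = 0 := by simp [r, div_mul_cancel₀ _ hy₀.2.ne']
    rw [Finset.sum_erase (f := fun y => (c y - r * g y) • y) _ (by simp only [hr, zero_smul])]
    simp only [sub_smul, mul_smul, Finset.sum_sub_distrib, ← Finset.smul_sum, hg, smul_zero,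
      sub_zero]

theorem exists_linearIndepOn_subset_mem_hull (s : Finset E) {v : E}
    (hv : v ∈ hull 𝕜 (s : Set E)) :
    ∃ t ⊆ s, LinearIndepOn 𝕜 id (t : Set E) ∧ v ∈ hull 𝕜 (t : Set E) := by
  classical
  induction s using Finset.strongInduction with
  | H s ih =>
    by_cases hs : LinearIndepOn 𝕜 id (s : Set E)
    · exact ⟨s, subset_rfl, hs, hv⟩
    obtain ⟨y₀, hy₀, hv'⟩ := exists_mem_hull_erase_of_not_linearIndepOn hs hv
    obtain ⟨t, hts, ht, hvt⟩ := ih _ (Finset.erase_ssubset hy₀) hv'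
    exact ⟨t, hts.trans (s.erase_subset _), ht, hvt⟩

lemma exists_fun_of_mem_hull_image {ι : Type*} [Fintype ι] {v : ι → E} {A : Set ι} {u : E}
    (hu : u ∈ hull 𝕜 (v '' A)) :
    ∃ t : ι → 𝕜, (∀ i, 0 ≤ t i) ∧ (∀ i ∉ A, t i = 0) ∧ ∑ i, t i • v i = u := by
  obtain ⟨l, hl, rfl⟩ := (Finsupp.mem_span_image_iff_linearCombination _).mp hu
  refine ⟨fun i => l i, fun i => (l i).2, fun i hi => ?_, ?_⟩
  · simp [(Finsupp.mem_supported' _ _).mp hl i hi]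
  · rw [Finsupp.linearCombination_apply,
      Finsupp.sum_fintype l (fun i c => c • v i) fun _ => zero_smul _ _]
    rfl

end OrderedField

section Topology

variable {E : Type*} [AddCommGroup E] [Module ℝ E] [TopologicalSpace E]
  [IsTopologicalAddGroup E] [ContinuousSMul ℝ E] [T2Space E]

lemma isClosed_hull_of_linearIndepOn {t : Finset E} (ht : LinearIndepOn ℝ id (t : Set E)) :
    IsClosed (hull ℝ (t : Set E) : Set E) := by
  let T := Fintype.linearCombination ℝ (fun y : t => (y : E))
  have hT : LinearMap.ker T = ⊥ :=
    LinearMap.ker_eq_bot.mpr ht.fintypeLinearCombination_injective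
  have himage : (hull ℝ (t : Set E) : Set E) = T '' Set.Ici 0 := by
    ext v
    rw [SetLike.mem_coe, hull, Submodule.mem_span_finset']
    constructor
    · rintro ⟨f, rfl⟩
      exact ⟨fun y => f y, fun y => (f y).2,
        by simp [T, Fintype.linearCombination_apply, Nonneg.coe_smul]⟩
    · rintro ⟨c, hc, rfl⟩
      exact ⟨fun y => ⟨c y, hc y⟩, by simp [T, Fintype.linearCombination_apply, Nonneg.mk_smul]⟩
  rw [himage]
  exact (T.isClosedEmbedding_of_injective hT).isClosedMap _ isClosed_Ici

theorem isClosed_of_fg {C : PointedCone ℝ E} (hC : C.FG) : IsClosed (C : Set E) := by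
  classical
  obtain ⟨s, rfl⟩ := hC
  let S := s.powerset.filter fun t : Finset E => LinearIndepOn ℝ id (t : Set E)
  have hunion : (hull ℝ (s : Set E) : Set E) = ⋃ t ∈ S, (hull ℝ (t : Set E) : Set E) := by
    refine subset_antisymm (fun v hv => ?_) (Set.iUnion₂_subset fun t ht => ?_)
    · obtain ⟨t, hts, ht, hvt⟩ := exists_linearIndepOn_subset_mem_hull s hv
      exact Set.mem_biUnion (Finset.mem_filter.mpr ⟨Finset.mem_powerset.mpr hts, ht⟩) hvt
    · exact Submodule.span_mono
        (Finset.coe_subset.mpr (Finset.mem_powerset.mp (Finset.mem_filter.mp ht).1))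
  rw [hunion]
  exact isClosed_biUnion_finset fun t ht =>
    isClosed_hull_of_linearIndepOn (Finset.mem_filter.mp ht).2

end Topology

theorem innerDual_innerDual_of_fg {E : Type*} [NormedAddCommGroup E] [InnerProductSpace ℝ E]
    [CompleteSpace E] {C : PointedCone ℝ E} (hC : C.FG) :
    (ProperCone.innerDual (ProperCone.innerDual (C : Set E) : Set E) : Set E) = C :=
  congrArg SetLike.coe (ProperCone.innerDual_innerDual ⟨C, isClosed_of_fg hC⟩)

end PointedCone

section Polyhedron

variable {ι E : Type*} [NormedAddCommGroup E] [InnerProductSpace ℝ E]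

def polyhedron (x : ι → E) (a : ι → ℝ) : Set E := {y | ∀ i, ⟪x i, y⟫ + a i ≤ 0}

lemma convex_polyhedron (x : ι → E) (a : ι → ℝ) : Convex ℝ (polyhedron x a) := by
  simp only [polyhedron, Set.ofPred_forall]
  refine convex_iInter fun i => ?_
  simpa only [le_neg_iff_add_nonpos_right, innerₛₗ_apply_apply] using
    convex_halfSpace_le (innerₛₗ ℝ (x i)).isLinear (-a i)

lemma eventually_add_smul_mem_polyhedron [Finite ι] {x : ι → E} {a : ι → ℝ} {w d : E}
    (hw : w ∈ polyhedron x a) (hd : ∀ i, ⟪x i, w⟫ + a i = 0 → ⟪x i, d⟫ ≤ 0) :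
    ∀ᶠ ε in 𝓝[>] (0 : ℝ), w + ε • d ∈ polyhedron x a := by
  refine eventually_all.mpr fun i => ?_
  have hexpand (ε : ℝ) : ⟪x i, w + ε • d⟫ + a i = (⟪x i, w⟫ + a i) + ε * ⟪x i, d⟫ := by
    rw [inner_add_right, real_inner_smul_right]
    ring
  simp only [hexpand]
  rcases (hw i).eq_or_lt with hactive | hinactive
  · filter_upwards [self_mem_nhdsWithin] with ε (hε : 0 < ε)
    rw [hactive, zero_add]
    exact mul_nonpos_of_nonneg_of_nonpos hε.le (hd i hactive)
  · refine eventually_nhdsWithin_of_eventually_nhds ?_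
    have hcont : Continuous fun ε : ℝ => (⟪x i, w⟫ + a i) + ε * ⟪x i, d⟫ := by fun_prop
    filter_upwards [hcont.continuousAt.eventually_lt continuousAt_const (by simpa using hinactive)]
      with ε hε using hε.le

lemma real_inner_sub_nonpos_of_forall_dist_le {K : Set E} (hK : Convex ℝ K) {z w : E}
    (hw : w ∈ K) (hnear : ∀ y ∈ K, dist z w ≤ dist z y) :
    ∀ y ∈ K, ⟪z - w, y - w⟫ ≤ 0 := by
  have : Nonempty K := ⟨⟨w, hw⟩⟩
  refine (norm_eq_iInf_iff_real_inner_le_zero hK hw).mp (le_antisymm ?_ ?_)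
  · exact le_ciInf fun y => by simpa only [dist_eq_norm] using hnear y y.2
  · exact ciInf_le ⟨0, Set.forall_mem_range.mpr fun _ => norm_nonneg _⟩ (⟨w, hw⟩ : K)

variable [Finite ι] {x : ι → E} {a : ι → ℝ} {z w : E}

lemma real_inner_sub_nonpos_of_forall_dist_le_polyhedron {d : E} (hw : w ∈ polyhedron x a)
    (hnear : ∀ y ∈ polyhedron x a, dist z w ≤ dist z y)
    (hd : ∀ i, ⟪x i, w⟫ + a i = 0 → ⟪x i, d⟫ ≤ 0) : ⟪z - w, d⟫ ≤ 0 := by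
  obtain ⟨ε, hεd, hε⟩ :=
    ((eventually_add_smul_mem_polyhedron hw hd).and self_mem_nhdsWithin).exists
  have h := real_inner_sub_nonpos_of_forall_dist_le (convex_polyhedron x a) hw hnear _ hεd
  rw [add_sub_cancel_left, real_inner_smul_right] at h
  exact nonpos_of_mul_nonpos_right h hε

theorem sub_mem_hull_active_of_forall_dist_le [CompleteSpace E] (hw : w ∈ polyhedron x a)
    (hnear : ∀ y ∈ polyhedron x a, dist z w ≤ dist z y) :
    z - w ∈ PointedCone.hull ℝ (x '' {i | ⟪x i, w⟫ + a i = 0}) := by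
  have hfg : (PointedCone.hull ℝ (x '' {i | ⟪x i, w⟫ + a i = 0})).FG :=
    Submodule.fg_span ((Set.toFinite _).image x)
  rw [← SetLike.mem_coe, ← PointedCone.innerDual_innerDual_of_fg hfg, SetLike.mem_coe,
    ProperCone.mem_innerDual]
  intro y hy
  have h := real_inner_sub_nonpos_of_forall_dist_le_polyhedron hw hnear (d := -y) fun i hi => by
    rw [inner_neg_right, neg_nonpos]
    exact hy (PointedCone.subset_hull ⟨i, hi, rfl⟩)
  rw [inner_neg_right, neg_nonpos] at h
  rwa [real_inner_comm]

end Polyhedron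

theorem stmt3_general (n m : ℕ) (x : Fin m → EuclideanSpace ℝ (Fin n))
    (a : Fin m → ℝ)
    (K : Set (EuclideanSpace ℝ (Fin n)))
    (hK : K = {y | ∀ i, ⟪x i, y⟫ + a i ≤ 0})
    (z w : EuclideanSpace ℝ (Fin n)) (hw : w ∈ K)
    (hnear : ∀ w' ∈ K, dist z w ≤ dist z w') :
    ∃ t : Fin m → ℝ, (∀ i, 0 ≤ t i) ∧ (∀ i, ⟪x i, w⟫ + a i ≠ 0 → t i = 0) ∧
      z = w + ∑ i, t i • x i := by
  subst hK
  obtain ⟨t, ht, htA, hsum⟩ :=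
    PointedCone.exists_fun_of_mem_hull_image (sub_mem_hull_active_of_forall_dist_le hw hnear)
  exact ⟨t, ht, htA, by rw [hsum, add_sub_cancel]⟩

/-- Let `K = {y | ∀ i, ⟪x i, y⟫ + a i ≤ 0}` be a nonempty polyhedral set
with nonzero `x i`.  For `z ∈ ℝ^n`, if `w` is the nearest point of `K` to `z`, then
`z ∈ {w} + Cone{x i | ⟪x i, w⟫ + a i = 0}`. -/
theorem stmt3 (n m : ℕ) (x : Fin m → EuclideanSpace ℝ (Fin n))
    (hx : ∀ i, x i ≠ 0) (a : Fin m → ℝ)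
    (K : Set (EuclideanSpace ℝ (Fin n)))
    (hK : K = {y | ∀ i, ⟪x i, y⟫ + a i ≤ 0})
    (hne : K.Nonempty)
    (z w : EuclideanSpace ℝ (Fin n)) (hw : w ∈ K)
    (hnear : ∀ w' ∈ K, dist z w ≤ dist z w') :
    ∃ t : Fin m → ℝ, (∀ i, 0 ≤ t i) ∧ (∀ i, ⟪x i, w⟫ + a i ≠ 0 → t i = 0) ∧
      z = w + ∑ i, t i • x i :=
  stmt3_general n m x a K hK z w hw hnear
end

section
/- For any finite collection x_1, …, x_m ∈ ℝ^n \ {0}, there exists a constant k > 0 such that for every y ∈ Cone{x_1, …, x_m}, the Euclidean norm ‖y‖ satisfies ‖y‖ ≤ k · max{ x_i · y | i = 1, …, m }. -/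
/-!
Writing `y = ∑ tᵢ xᵢ` with `tᵢ ≥ 0` gives `‖y‖² = ∑ tᵢ ⟪xᵢ, y⟫ ≤ (∑ tᵢ) · maxᵢ ⟪xᵢ, y⟫`, so it
suffices to represent every `y` of the cone with `∑ tᵢ ≤ C ‖y‖`. By the conic Carathéodory theorem
`y` has a representation supported on a linearly independent subfamily, and on each of the finitely
many such subfamilies the coefficients are bounded by a multiple of `‖y‖`, since an injective linear
map on a finite-dimensional space is antilipschitz.
-/

open RealInnerProductSpace Finset Function

variable {ι E : Type*} [Fintype ι]

lemma sum_subtype_eq_of_support_subset {M : Type*} [AddCommMonoid M] {f : ι → M} {s : Set ι}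
    [Fintype s] (h : support f ⊆ s) : ∑ i : s, f i = ∑ i, f i := by
  classical
  rw [← Fintype.sum_subtype_add_sum_subtype (· ∈ s) f,
    Fintype.sum_eq_zero (fun i : {i // i ∉ s} => f i), add_zero]
  · congr!
  · exact fun i => notMem_support.mp fun hi => i.2 (h hi)

lemma exists_ne_zero_sum_smul_eq_zero_of_not_linearIndepOn {R M : Type*} [Ring R]
    [AddCommGroup M] [Module R M] {v : ι → M} {s : Set ι} (h : ¬LinearIndepOn R v s) :
    ∃ g : ι → R, g ≠ 0 ∧ support g ⊆ s ∧ ∑ i, g i • v i = 0 := by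
  classical
  simp only [linearIndepOn_iff', not_forall, exists_prop] at h
  obtain ⟨t, g, hts, hgv, i, hit, hgi⟩ := h
  refine ⟨fun i => if i ∈ t then g i else 0, fun h0 => hgi (by simpa [hit] using congrFun h0 i),
    fun j hj => hts ?_, ?_⟩
  · by_contra hjt
    exact hj (if_neg hjt)
  · simpa [ite_smul, sum_ite_mem] using hgv

section Caratheodory

variable {𝕜 : Type*} [Field 𝕜] [LinearOrder 𝕜] [IsStrictOrderedRing 𝕜] [AddCommGroup E]
  [Module 𝕜 E] {v : ι → E}

lemma exists_nonneg_repr_support_ssubset_of_pos {t c : ι → 𝕜} (ht : 0 ≤ t)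
    (hct : support c ⊆ support t) (hcv : ∑ i, c i • v i = 0) (hc : ∃ i, 0 < c i) :
    ∃ t' : ι → 𝕜, 0 ≤ t' ∧ support t' ⊂ support t ∧ ∑ i, t' i • v i = ∑ i, t i • v i := by
  classical
  obtain ⟨j, hj, hmin⟩ := (univ.filter (0 < c ·)).exists_min_image (fun i => t i / c i)
    (by simpa [Finset.Nonempty] using hc)
  have hcj : 0 < c j := by simpa using hj
  -- the largest multiple of `c` that can be subtracted from `t` keeping all entries nonnegative
  set lam := t j / c j
  have hlam : 0 ≤ lam := div_nonneg (ht j) hcj.le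
  refine ⟨fun i => t i - lam * c i, fun i => ?_, ?_, ?_⟩
  · rcases le_or_gt (c i) 0 with hci | hci
    · nlinarith [ht i]
    · have := hmin i (by simpa using hci)
      rw [le_div_iff₀ hci] at this
      simpa using this
  · refine Set.ssubset_iff_exists.mpr ⟨fun i hi => ?_, j, hct hcj.ne', by simp [lam, hcj.ne']⟩
    by_contra hti
    have hci : c i = 0 := notMem_support.mp fun h => hti (hct h)
    exact hi (by simp [notMem_support.mp hti, hci])
  · simp only [sub_smul, sum_sub_distrib, mul_smul, ← smul_sum]
    rw [hcv, smul_zero, sub_zero]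

lemma exists_nonneg_repr_support_ssubset {t c : ι → 𝕜} (ht : 0 ≤ t) (hc : c ≠ 0)
    (hct : support c ⊆ support t) (hcv : ∑ i, c i • v i = 0) :
    ∃ t' : ι → 𝕜, 0 ≤ t' ∧ support t' ⊂ support t ∧ ∑ i, t' i • v i = ∑ i, t i • v i := by
  by_cases hpos : ∃ i, 0 < c i
  · exact exists_nonneg_repr_support_ssubset_of_pos ht hct hcv hpos
  · push Not at hpos
    obtain ⟨i, hi⟩ := Function.ne_iff.mp hc
    refine exists_nonneg_repr_support_ssubset_of_pos (c := -c) ht (by simpa using hct)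
      (by simp [neg_smul, hcv]) ⟨i, ?_⟩
    simpa using lt_of_le_of_ne (hpos i) hi

theorem exists_nonneg_repr_linearIndepOn_support {t : ι → 𝕜} (ht : 0 ≤ t) :
    ∃ t' : ι → 𝕜, 0 ≤ t' ∧ LinearIndepOn 𝕜 v (support t') ∧
      ∑ i, t' i • v i = ∑ i, t i • v i := by
  by_cases hli : LinearIndepOn 𝕜 v (support t)
  · exact ⟨t, ht, hli, rfl⟩
  obtain ⟨c, hc, hct, hcv⟩ := exists_ne_zero_sum_smul_eq_zero_of_not_linearIndepOn hli
  obtain ⟨t', ht', hsupp, hsum⟩ := exists_nonneg_repr_support_ssubset ht hc hct hcv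
  obtain ⟨t'', ht'', hli'', hsum'⟩ := exists_nonneg_repr_linearIndepOn_support ht'
  exact ⟨t'', ht'', hli'', hsum'.trans hsum⟩
termination_by (support t).ncard
decreasing_by exact Set.ncard_lt_ncard hsupp

end Caratheodory

section Bound

variable [NormedAddCommGroup E]

lemma LinearIndependent.exists_sum_abs_le_mul_norm [NormedSpace ℝ E] {v : ι → E}
    (hv : LinearIndependent ℝ v) :
    ∃ C, ∀ t : ι → ℝ, ∑ i, |t i| ≤ C * ‖∑ i, t i • v i‖ := by
  obtain ⟨K, -, hK⟩ := (Fintype.linearCombination ℝ v).exists_antilipschitzWith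
    (LinearMap.ker_eq_bot.mpr (linearIndependent_iff_injective_fintypeLinearCombination.mp hv))
  refine ⟨Fintype.card ι * K, fun t => ?_⟩
  calc ∑ i, |t i| ≤ ∑ _i : ι, ‖t‖ := sum_le_sum fun i _ => norm_le_pi_norm t i
    _ = Fintype.card ι * ‖t‖ := by simp
    _ ≤ Fintype.card ι * (K * ‖Fintype.linearCombination ℝ v t‖) := by
      gcongr; exact ZeroHomClass.bound_of_antilipschitz _ hK t
    _ = Fintype.card ι * K * ‖∑ i, t i • v i‖ := by
      rw [Fintype.linearCombination_apply, mul_assoc]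

lemma exists_sum_abs_le_mul_norm_of_linearIndepOn_support [NormedSpace ℝ E] (v : ι → E) :
    ∃ C > 0, ∀ t : ι → ℝ, LinearIndepOn ℝ v (support t) →
      ∑ i, |t i| ≤ C * ‖∑ i, t i • v i‖ := by
  classical
  have hbound : ∀ s : Set ι, ∃ C, LinearIndepOn ℝ v s → ∀ t : ι → ℝ, support t ⊆ s →
      ∑ i, |t i| ≤ C * ‖∑ i, t i • v i‖ := by
    intro s
    by_cases hs : LinearIndepOn ℝ v s
    · obtain ⟨C, hC⟩ := LinearIndependent.exists_sum_abs_le_mul_norm hs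
      refine ⟨C, fun _ t hts => ?_⟩
      have := hC fun i => t i
      have habs : support (fun i => |t i|) ⊆ s := by simpa using hts
      have hsmul : support (fun i => t i • v i) ⊆ s := (support_smul_subset_left _ _).trans hts
      rwa [sum_subtype_eq_of_support_subset habs, sum_subtype_eq_of_support_subset hsmul] at this
    · exact ⟨0, fun h => absurd h hs⟩
  choose C hC using hbound
  obtain ⟨M, hM⟩ := Finite.exists_le C
  refine ⟨max M 1, by positivity, fun t ht => (hC _ ht t subset_rfl).trans ?_⟩
  gcongr
  exact (hM _).trans (le_max_left _ _)

variable [InnerProductSpace ℝ E]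

lemma norm_sq_le_sum_mul_sup'_inner (x : ι → E) {t : ι → ℝ} (ht : 0 ≤ t)
    (h : (univ : Finset ι).Nonempty) :
    ‖∑ i, t i • x i‖ ^ 2 ≤ (∑ i, t i) * univ.sup' h fun i => ⟪x i, ∑ j, t j • x j⟫ := by
  rw [← real_inner_self_eq_norm_sq, sum_inner, sum_mul]
  refine sum_le_sum fun i _ => ?_
  rw [real_inner_smul_left]
  exact mul_le_mul_of_nonneg_left (le_sup' (fun i => ⟪x i, ∑ j, t j • x j⟫) (mem_univ i)) (ht i)

lemma norm_le_mul_sup'_inner_of_sum_le (x : ι → E) {t : ι → ℝ} (ht : 0 ≤ t) {C : ℝ}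
    (hC : ∑ i, t i ≤ C * ‖∑ i, t i • x i‖) (h : (univ : Finset ι).Nonempty) :
    ‖∑ i, t i • x i‖ ≤ C * univ.sup' h fun i => ⟪x i, ∑ j, t j • x j⟫ := by
  set y := ∑ i, t i • x i
  rcases eq_or_ne y 0 with hy | hy
  · simp [hy]
  have hy : 0 < ‖y‖ := norm_pos_iff.mpr hy
  have hsq : ‖y‖ ^ 2 ≤ (∑ i, t i) * univ.sup' h fun i => ⟪x i, y⟫ :=
    norm_sq_le_sum_mul_sup'_inner x ht h
  have hM : 0 < univ.sup' h fun i => ⟪x i, y⟫ :=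
    pos_of_mul_pos_right ((pow_pos hy 2).trans_le hsq) (sum_nonneg fun i _ => ht i)
  nlinarith

end Bound

theorem stmt4_general (n m : ℕ) (hm : 0 < m) (x : Fin m → EuclideanSpace ℝ (Fin n)) :
    ∃ k : ℝ, 0 < k ∧
      ∀ y ∈ {y : EuclideanSpace ℝ (Fin n) |
          ∃ t : Fin m → ℝ, (∀ i, 0 ≤ t i) ∧ y = ∑ i, t i • x i},
        ‖y‖ ≤ k * (Finset.univ.sup' (Finset.univ_nonempty_iff.mpr ⟨⟨0, hm⟩⟩)
          fun i => ⟪x i, y⟫) := by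
  obtain ⟨C, hC, hbound⟩ := exists_sum_abs_le_mul_norm_of_linearIndepOn_support x
  refine ⟨C, hC, ?_⟩
  rintro y ⟨t, ht, rfl⟩
  obtain ⟨t', ht', hli, hsum⟩ := exists_nonneg_repr_linearIndepOn_support (v := x) (t := t) ht
  rw [← hsum]
  refine norm_le_mul_sup'_inner_of_sum_le x ht' ?_ _
  simpa only [abs_of_nonneg (ht' _)] using hbound t' hli

/-- For nonzero vectors `x 1, …, x m` of `ℝ^n` (with `m ≥ 1`), there is a
constant `k > 0` such that every `y` in the cone hull of the `x i` satisfies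
`‖y‖ ≤ k * max_i ⟪x i, y⟫`. -/
theorem stmt4 (n m : ℕ) (hm : 0 < m) (x : Fin m → EuclideanSpace ℝ (Fin n))
    (hx : ∀ i, x i ≠ 0) :
    ∃ k : ℝ, 0 < k ∧
      ∀ y ∈ {y : EuclideanSpace ℝ (Fin n) |
          ∃ t : Fin m → ℝ, (∀ i, 0 ≤ t i) ∧ y = ∑ i, t i • x i},
        ‖y‖ ≤ k * (Finset.univ.sup' (Finset.univ_nonempty_iff.mpr ⟨⟨0, hm⟩⟩)
          fun i => ⟪x i, y⟫) :=
  stmt4_general n m hm x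
end

section
/- Let K = Cone{x_1, …, x_m} ⊆ ℝ^n and suppose there exist indices i_1, …, i_s and positive reals c_{i_1}, …, c_{i_s} with Σ_j c_{i_j} x_{i_j} = 0. Then K = ⋃_{j=1}^s Cone{ x_l | l ≠ i_j }. -/
/-!
Write `y = ∑ tᵢ xᵢ` with `t ≥ 0` and subtract `λ ∑_{i ∈ I} cᵢ xᵢ = 0`, where
`λ = min_{i ∈ I} tᵢ / cᵢ`. The new coefficients are still nonnegative, and the one at an index
`j` realising the minimum vanishes, so `y` lies in the cone of the generators other than `xⱼ`.
-/

open Finset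

section

variable {ι k : Type*} [Field k] [LinearOrder k] [IsStrictOrderedRing k]

theorem Finset.exists_mul_le_and_mul_eq (I : Finset ι) (hI : I.Nonempty) (t : ι → k) {c : ι → k}
    (hc : ∀ i ∈ I, 0 < c i) :
    ∃ j ∈ I, ∃ lam : k, (∀ i ∈ I, lam * c i ≤ t i) ∧ lam * c j = t j := by
  obtain ⟨j, hjI, hmin⟩ := I.exists_min_image (fun i => t i / c i) hI
  refine ⟨j, hjI, t j / c j, fun i hi => ?_, div_mul_cancel₀ _ (hc j hjI).ne'⟩
  calc t j / c j * c i ≤ t i / c i * c i := mul_le_mul_of_nonneg_right (hmin i hi) (hc i hi).le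
    _ = t i := div_mul_cancel₀ _ (hc i hi).ne'

variable {M : Type*} [AddCommGroup M] [Module k M] [Fintype ι] [DecidableEq ι]

theorem exists_nonneg_coeff_eq_zero_of_sum_eq_zero {I : Finset ι} (hI : I.Nonempty)
    {x : ι → M} {c : ι → k} (hc : ∀ i ∈ I, 0 < c i) (hsum : ∑ i ∈ I, c i • x i = 0)
    {t : ι → k} (ht : ∀ i, 0 ≤ t i) :
    ∃ j ∈ I, ∃ t' : ι → k, (∀ i, 0 ≤ t' i) ∧ t' j = 0 ∧
      ∑ i, t' i • x i = ∑ i, t i • x i := by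
  obtain ⟨j, hjI, lam, hle, hj⟩ := I.exists_mul_le_and_mul_eq hI t hc
  refine ⟨j, hjI, fun i => t i - if i ∈ I then lam * c i else 0, fun i => ?_, ?_, ?_⟩
  · dsimp only
    split_ifs with hi
    · exact sub_nonneg.mpr (hle i hi)
    · simpa using ht i
  · simp [hjI, hj]
  · have hshift : ∑ i, (if i ∈ I then lam * c i else 0) • x i = lam • ∑ i ∈ I, c i • x i := by
      simp only [ite_smul, zero_smul, sum_ite_mem, univ_inter, smul_sum, mul_smul]
    simp only [sub_smul, sum_sub_distrib, hshift, hsum, smul_zero, sub_zero]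

theorem setOf_conicCombination_eq_biUnion {I : Finset ι} (hI : I.Nonempty)
    {x : ι → M} {c : ι → k} (hc : ∀ i ∈ I, 0 < c i) (hsum : ∑ i ∈ I, c i • x i = 0) :
    {y : M | ∃ t : ι → k, (∀ i, 0 ≤ t i) ∧ y = ∑ i, t i • x i}
      = ⋃ j ∈ I, {y | ∃ t : ι → k, (∀ i, 0 ≤ t i) ∧ t j = 0 ∧ y = ∑ i, t i • x i} := by
  ext y
  simp only [Set.mem_ofPred_eq, Set.mem_iUnion]
  constructor
  · rintro ⟨t, ht, rfl⟩
    obtain ⟨j, hjI, t', ht', htj, heq⟩ :=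
      exists_nonneg_coeff_eq_zero_of_sum_eq_zero hI hc hsum ht
    exact ⟨j, hjI, t', ht', htj, heq.symm⟩
  · rintro ⟨j, -, t, ht, -, rfl⟩
    exact ⟨t, ht, rfl⟩

end

/-- If `K = Cone{x 1, …, x m}` and there is a nonempty set `I` of indices
and positive reals `c i` (`i ∈ I`) with `∑ i ∈ I, c i • x i = 0`, then
`K = ⋃ j ∈ I, Cone{x l | l ≠ j}`. -/
theorem stmt6 (n m : ℕ) (x : Fin m → EuclideanSpace ℝ (Fin n))
    (I : Finset (Fin m)) (hI : I.Nonempty) (c : Fin m → ℝ)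
    (hc : ∀ i ∈ I, 0 < c i) (hsum : ∑ i ∈ I, c i • x i = 0) :
    {y : EuclideanSpace ℝ (Fin n) | ∃ t : Fin m → ℝ, (∀ i, 0 ≤ t i) ∧ y = ∑ i, t i • x i}
      = ⋃ j ∈ I, {y | ∃ t : Fin m → ℝ, (∀ i, 0 ≤ t i) ∧ t j = 0 ∧ y = ∑ i, t i • x i} :=
  setOf_conicCombination_eq_biUnion hI hc hsum
end

section
/- For every pair (f, g) of tropical rational functions in n variables, the congruence variety V((f,g)) = { x ∈ ℝ^n | f(x) = g(x) } is a finite union of ℝ-rational polyhedral sets. -/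
/-!
Clearing denominators, `f₁ - f₂ = g₁ - g₂` becomes `f₁ + g₂ = g₁ + f₂`, an equation between two
maxima of finitely many affine functions with rational linear parts (tropical products of
tropical polynomials). Where `max_s φ_s = max_t ψ_t`, some pair `(s, t)` attains both maxima
with `φ_s = ψ_t`; for a fixed pair these conditions are finitely many rational linear
inequalities, so the equality locus is the union of these polyhedra over all pairs.
-/

/-- A tropical (max-plus) polynomial function `ℝ^n → ℝ`:
`x ↦ max_{i ∈ A} (a i + i · x)` over a nonempty finite set `A ⊆ (ℤ≥0)^n`. -/
def IsTropPoly (n : ℕ) (f : (Fin n → ℝ) → ℝ) : Prop :=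
  ∃ (A : Finset (Fin n → ℕ)) (hA : A.Nonempty) (a : (Fin n → ℕ) → ℝ),
    ∀ x, f x = A.sup' hA fun i => a i + ∑ j, (i j : ℝ) * x j

/-- A tropical rational function is a difference of two tropical polynomial functions. -/
def IsTropRat (n : ℕ) (f : (Fin n → ℝ) → ℝ) : Prop :=
  ∃ f₁ f₂, IsTropPoly n f₁ ∧ IsTropPoly n f₂ ∧ ∀ x, f x = f₁ x - f₂ x

/-- An `ℝ`-rational polyhedral set: the solution set of finitely many linear
inequalities with rational non-constant coefficients (and real constant terms). -/
def IsRatPolyhedral (n : ℕ) (P : Set (Fin n → ℝ)) : Prop :=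
  ∃ (m : ℕ) (a : Fin m → Fin n → ℚ) (b : Fin m → ℝ),
    P = {x | ∀ i, (∑ j, (a i j : ℝ) * x j) + b i ≤ 0}

open Finset

lemma Finset.sup'_add_sup' {ι κ G : Type*} [AddGroup G] [LinearOrder G] [AddLeftMono G]
    [AddRightMono G] {s : Finset ι} {t : Finset κ} (hs : s.Nonempty) (ht : t.Nonempty)
    (f : ι → G) (g : κ → G) :
    s.sup' hs f + t.sup' ht g = (s ×ˢ t).sup' (hs.product ht) fun p => f p.1 + g p.2 := by
  rw [sup'_product_left, sup'_add]
  simp only [add_sup']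

lemma Finset.setOf_sup'_eq_sup' {X ι κ α : Type*} [LinearOrder α] {A : Finset ι} {B : Finset κ}
    (hA : A.Nonempty) (hB : B.Nonempty) (φ : ι → X → α) (ψ : κ → X → α) :
    {x | A.sup' hA (φ · x) = B.sup' hB (ψ · x)} =
      ⋃ p ∈ A ×ˢ B, (⋂ i ∈ A, {x | φ i x ≤ φ p.1 x}) ∩ (⋂ j ∈ B, {x | ψ j x ≤ ψ p.2 x}) ∩
        {x | φ p.1 x = ψ p.2 x} := by
  ext x
  simp only [Set.mem_ofPred_eq, Set.mem_iUnion, Set.mem_inter_iff, Set.mem_iInter, mem_product,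
    exists_prop, Prod.exists]
  constructor
  · intro h
    obtain ⟨s, hs, hφs⟩ := exists_mem_eq_sup' hA (φ · x)
    obtain ⟨t, ht, hψt⟩ := exists_mem_eq_sup' hB (ψ · x)
    refine ⟨s, t, ⟨hs, ht⟩, ⟨fun i hi => ?_, fun j hj => ?_⟩, ?_⟩
    · exact hφs ▸ le_sup' (φ · x) hi
    · exact hψt ▸ le_sup' (ψ · x) hj
    · rw [← hφs, ← hψt, h]
  · rintro ⟨s, t, ⟨hs, ht⟩, ⟨hφ, hψ⟩, hst⟩
    rwa [le_antisymm (sup'_le _ _ hφ) (le_sup' (φ · x) hs),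
      le_antisymm (sup'_le _ _ hψ) (le_sup' (ψ · x) ht)]

def IsRatAffine (n : ℕ) (φ : (Fin n → ℝ) → ℝ) : Prop :=
  ∃ (c : Fin n → ℚ) (d : ℝ), ∀ x, φ x = ∑ j, (c j : ℝ) * x j + d

namespace IsRatAffine

variable {n : ℕ} {φ ψ : (Fin n → ℝ) → ℝ}

lemma add (hφ : IsRatAffine n φ) (hψ : IsRatAffine n ψ) : IsRatAffine n (φ + ψ) := by
  obtain ⟨c, d, hφ⟩ := hφ
  obtain ⟨c', d', hψ⟩ := hψ
  refine ⟨c + c', d + d', fun x => ?_⟩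
  simp only [Pi.add_apply, hφ, hψ, Rat.cast_add, add_mul, sum_add_distrib]
  ring

lemma neg (hφ : IsRatAffine n φ) : IsRatAffine n (-φ) := by
  obtain ⟨c, d, hφ⟩ := hφ
  refine ⟨-c, -d, fun x => ?_⟩
  simp only [Pi.neg_apply, hφ, Rat.cast_neg, neg_mul, sum_neg_distrib]
  ring

lemma sub (hφ : IsRatAffine n φ) (hψ : IsRatAffine n ψ) : IsRatAffine n (φ - ψ) :=
  sub_eq_add_neg φ ψ ▸ hφ.add hψ.neg

lemma tropMonomial (a : ℝ) (i : Fin n → ℕ) : IsRatAffine n fun x => a + ∑ j, (i j : ℝ) * x j :=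
  ⟨fun j => i j, a, fun x => by simp only [Rat.cast_natCast]; ring⟩

lemma isRatPolyhedral_setOf_nonpos (hφ : IsRatAffine n φ) : IsRatPolyhedral n {x | φ x ≤ 0} := by
  obtain ⟨c, d, hφ⟩ := hφ
  exact ⟨1, fun _ => c, fun _ => d, by ext x; simp [hφ]⟩

lemma isRatPolyhedral_setOf_le (hφ : IsRatAffine n φ) (hψ : IsRatAffine n ψ) :
    IsRatPolyhedral n {x | φ x ≤ ψ x} := by
  simpa only [Pi.sub_apply, sub_nonpos] using (hφ.sub hψ).isRatPolyhedral_setOf_nonpos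

end IsRatAffine

namespace IsRatPolyhedral

variable {n : ℕ}

lemma univ : IsRatPolyhedral n Set.univ :=
  ⟨0, Fin.elim0, Fin.elim0, by ext x; simp⟩

lemma inter {P Q : Set (Fin n → ℝ)} (hP : IsRatPolyhedral n P) (hQ : IsRatPolyhedral n Q) :
    IsRatPolyhedral n (P ∩ Q) := by
  obtain ⟨m, a, b, rfl⟩ := hP
  obtain ⟨m', a', b', rfl⟩ := hQ
  refine ⟨m + m', Fin.append a a', Fin.append b b', ?_⟩
  ext x
  simp only [Set.mem_inter_iff, Set.mem_ofPred_eq, Fin.forall_fin_add, Fin.append_left,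
    Fin.append_right]

lemma biInter {ι : Type*} (s : Finset ι) {P : ι → Set (Fin n → ℝ)}
    (hP : ∀ i ∈ s, IsRatPolyhedral n (P i)) : IsRatPolyhedral n (⋂ i ∈ s, P i) := by
  classical
  induction s using Finset.induction_on with
  | empty => simpa using univ
  | insert a s _ ih =>
    rw [Finset.set_biInter_insert]
    exact (hP a (mem_insert_self a s)).inter (ih fun i hi => hP i (mem_insert_of_mem hi))

lemma exists_fin_iUnion_eq_biUnion {ι : Type*} (s : Finset ι) {P : ι → Set (Fin n → ℝ)}
    (hP : ∀ i ∈ s, IsRatPolyhedral n (P i)) :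
    ∃ (k : ℕ) (Q : Fin k → Set (Fin n → ℝ)),
      (∀ i, IsRatPolyhedral n (Q i)) ∧ ⋃ i ∈ s, P i = ⋃ i, Q i := by
  refine ⟨s.card, fun i => P (s.equivFin.symm i), fun i => hP _ (s.equivFin.symm i).2, ?_⟩
  rw [s.equivFin.symm.surjective.iUnion_comp (fun i => P i), Set.iUnion_subtype]

end IsRatPolyhedral

lemma IsRatAffine.isRatPolyhedral_setOf_eq {n : ℕ} {φ ψ : (Fin n → ℝ) → ℝ}
    (hφ : IsRatAffine n φ) (hψ : IsRatAffine n ψ) : IsRatPolyhedral n {x | φ x = ψ x} := by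
  simp only [le_antisymm_iff, Set.ofPred_and]
  exact (hφ.isRatPolyhedral_setOf_le hψ).inter (hψ.isRatPolyhedral_setOf_le hφ)

def IsMaxRatAffine (n : ℕ) (f : (Fin n → ℝ) → ℝ) : Prop :=
  ∃ (ι : Type) (A : Finset ι) (hA : A.Nonempty) (φ : ι → (Fin n → ℝ) → ℝ),
    (∀ i, IsRatAffine n (φ i)) ∧ ∀ x, f x = A.sup' hA (φ · x)

lemma IsTropPoly.isMaxRatAffine {n : ℕ} {f : (Fin n → ℝ) → ℝ} (hf : IsTropPoly n f) :
    IsMaxRatAffine n f := by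
  obtain ⟨A, hA, a, hf⟩ := hf
  exact ⟨_, A, hA, _, fun i => IsRatAffine.tropMonomial (a i) i, hf⟩

namespace IsMaxRatAffine

variable {n : ℕ} {f g : (Fin n → ℝ) → ℝ}

lemma add (hf : IsMaxRatAffine n f) (hg : IsMaxRatAffine n g) : IsMaxRatAffine n (f + g) := by
  obtain ⟨ι, A, hA, φ, hφ, hf⟩ := hf
  obtain ⟨κ, B, hB, ψ, hψ, hg⟩ := hg
  refine ⟨ι × κ, A ×ˢ B, hA.product hB, fun p => φ p.1 + ψ p.2,
    fun p => (hφ p.1).add (hψ p.2), fun x => ?_⟩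
  rw [Pi.add_apply, hf, hg, sup'_add_sup']
  rfl

lemma exists_setOf_eq_eq_iUnion (hf : IsMaxRatAffine n f) (hg : IsMaxRatAffine n g) :
    ∃ (k : ℕ) (P : Fin k → Set (Fin n → ℝ)),
      (∀ i, IsRatPolyhedral n (P i)) ∧ {x | f x = g x} = ⋃ i, P i := by
  obtain ⟨ι, A, hA, φ, hφ, hf⟩ := hf
  obtain ⟨κ, B, hB, ψ, hψ, hg⟩ := hg
  simp only [hf, hg, setOf_sup'_eq_sup']
  refine IsRatPolyhedral.exists_fin_iUnion_eq_biUnion _ fun p _ => ?_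
  refine .inter (.inter (.biInter A fun i _ => (hφ i).isRatPolyhedral_setOf_le (hφ p.1))
    (.biInter B fun j _ => (hψ j).isRatPolyhedral_setOf_le (hψ p.2))) ?_
  exact (hφ p.1).isRatPolyhedral_setOf_eq (hψ p.2)

end IsMaxRatAffine

/-- For tropical rational functions `f, g` in `n` variables, the
congruence variety `{x ∈ ℝ^n | f x = g x}` is a finite union of `ℝ`-rational
polyhedral sets. -/
theorem stmt7 (n : ℕ) (f g : (Fin n → ℝ) → ℝ)
    (hf : IsTropRat n f) (hg : IsTropRat n g) :
    ∃ (k : ℕ) (P : Fin k → Set (Fin n → ℝ)),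
      (∀ i, IsRatPolyhedral n (P i)) ∧ {x | f x = g x} = ⋃ i, P i := by
  obtain ⟨f₁, f₂, hf₁, hf₂, hf⟩ := hf
  obtain ⟨g₁, g₂, hg₁, hg₂, hg⟩ := hg
  have hfg : {x | f x = g x} = {x | (f₁ + g₂) x = (g₁ + f₂) x} := by
    ext x
    simp only [Set.mem_ofPred_eq, hf, hg, Pi.add_apply, sub_eq_sub_iff_add_eq_add]
  rw [hfg]
  exact (hf₁.isMaxRatAffine.add hg₂.isMaxRatAffine).exists_setOf_eq_eq_iUnion
    (hg₁.isMaxRatAffine.add hf₂.isMaxRatAffine)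
end

section
/- Let E be a congruence on the tropical rational function semifield T(X_1,…,X_n)-bar, and let f, g be nonzero elements (i.e., not equal to −∞). Then (f, g) ∈ E if and only if both (f ⊙ g^{⊙(−1)} ⊕ 0, 0) ∈ E and (f^{⊙(−1)} ⊙ g ⊕ 0, 0) ∈ E. -/
/-- The nonzero (≠ -∞) elements of the tropical rational function semifield,
viewed as functions. -/
abbrev TRF (n : ℕ) := { f : (Fin n → ℝ) → ℝ // IsTropRat n f }

/-- The tropical rational function semifield `T(X₁,…,Xₙ)-bar`: tropical rational
functions together with a bottom element `⊥ = -∞`. -/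
abbrev TR (n : ℕ) := WithBot (TRF n)

/-- `add` realizes tropical addition `⊕` (pointwise max, with `-∞` neutral). -/
def AddLaw (n : ℕ) (add : TR n → TR n → TR n) : Prop :=
  (∀ f g : TRF n, ∃ h : TRF n, add ↑f ↑g = ↑h ∧ ∀ x, h.1 x = max (f.1 x) (g.1 x)) ∧
  (∀ a, add a ⊥ = a) ∧ (∀ a, add ⊥ a = a)

/-- `mul` realizes tropical multiplication `⊙` (pointwise sum, with `-∞` absorbing). -/
def MulLaw (n : ℕ) (mul : TR n → TR n → TR n) : Prop :=
  (∀ f g : TRF n, ∃ h : TRF n, mul ↑f ↑g = ↑h ∧ ∀ x, h.1 x = f.1 x + g.1 x) ∧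
  (∀ a, mul a ⊥ = ⊥) ∧ (∀ a, mul ⊥ a = ⊥)

/-- A congruence: an equivalence relation compatible with both operations. -/
def IsCongruence {α : Type*} (add mul : α → α → α) (E : α → α → Prop) : Prop :=
  (∀ a, E a a) ∧ (∀ a b, E a b → E b a) ∧ (∀ a b c, E a b → E b c → E a c) ∧
  (∀ a b c d, E a b → E c d → E (add a c) (add b d)) ∧
  (∀ a b c d, E a b → E c d → E (mul a c) (mul b d))


lemma trf_coe_eq {n : ℕ} (h k : TRF n) (hhk : ∀ x, h.1 x = k.1 x) :
    (↑h : TR n) = ↑k := by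
  congr 1
  exact Subtype.ext (funext hhk)

lemma trf_neg {n : ℕ} (g : TRF n) : IsTropRat n (fun x => -g.1 x) := by
  obtain ⟨f₁, f₂, h₁, h₂, hg⟩ := g.2
  exact ⟨f₂, f₁, h₂, h₁, fun x => by show -g.1 x = _; rw [hg x]; ring⟩

/-- For a congruence `E` on the tropical rational function semifield and
nonzero elements `f, g`, one has `(f, g) ∈ E` iff both
`(f ⊙ g^{⊙(-1)} ⊕ 0, 0) ∈ E` and `(f^{⊙(-1)} ⊙ g ⊕ 0, 0) ∈ E`.
Here `p` is the element `f ⊙ g^{⊙(-1)} ⊕ 0`, `q` is `f^{⊙(-1)} ⊙ g ⊕ 0`, and `one`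
is the multiplicative identity (the constant function `0`). -/
theorem stmt8 (n : ℕ) (add mul : TR n → TR n → TR n)
    (hadd : AddLaw n add) (hmul : MulLaw n mul)
    (E : TR n → TR n → Prop) (hE : IsCongruence add mul E)
    (one : TRF n) (hone : ∀ x, one.1 x = 0)
    (f g p q : TRF n)
    (hp : ∀ x, p.1 x = max (f.1 x - g.1 x) 0)
    (hq : ∀ x, q.1 x = max (g.1 x - f.1 x) 0) :
    E ↑f ↑g ↔ (E ↑p ↑one ∧ E ↑q ↑one) := by
  obtain ⟨hrefl, hsym, htrans, haddc, hmulc⟩ := hE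
  set ginv : TRF n := ⟨fun x => -g.1 x, trf_neg g⟩ with hginv
  set finv : TRF n := ⟨fun x => -f.1 x, trf_neg f⟩ with hfinv
  constructor
  · intro hfg
    constructor
    · have h1 := hmulc _ _ _ _ hfg (hrefl (↑ginv))
      obtain ⟨h, hh, hhx⟩ := hmul.1 f ginv
      obtain ⟨k, hk, hkx⟩ := hmul.1 g ginv
      rw [hh, hk] at h1
      have hk1 : (↑k : TR n) = ↑one := trf_coe_eq _ _ fun x => by
        rw [hkx x, hone x]; simp [hginv]
      rw [hk1] at h1
      have h2 := haddc _ _ _ _ h1 (hrefl (↑one))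
      obtain ⟨u, hu, hux⟩ := hadd.1 h one
      obtain ⟨v, hv, hvx⟩ := hadd.1 one one
      rw [hu, hv] at h2
      have hu1 : (↑u : TR n) = ↑p := trf_coe_eq _ _ fun x => by
        rw [hux x, hhx x, hone x, hp x]; simp [hginv, sub_eq_add_neg]
      have hv1 : (↑v : TR n) = ↑one := trf_coe_eq _ _ fun x => by
        rw [hvx x, hone x]; simp
      rwa [hu1, hv1] at h2
    · have h1 := hmulc _ _ _ _ (hsym _ _ hfg) (hrefl (↑finv))
      obtain ⟨h, hh, hhx⟩ := hmul.1 g finv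
      obtain ⟨k, hk, hkx⟩ := hmul.1 f finv
      rw [hh, hk] at h1
      have hk1 : (↑k : TR n) = ↑one := trf_coe_eq _ _ fun x => by
        rw [hkx x, hone x]; simp [hfinv]
      rw [hk1] at h1
      have h2 := haddc _ _ _ _ h1 (hrefl (↑one))
      obtain ⟨u, hu, hux⟩ := hadd.1 h one
      obtain ⟨v, hv, hvx⟩ := hadd.1 one one
      rw [hu, hv] at h2
      have hu1 : (↑u : TR n) = ↑q := trf_coe_eq _ _ fun x => by
        rw [hux x, hhx x, hone x, hq x]; simp [hfinv, sub_eq_add_neg]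
      have hv1 : (↑v : TR n) = ↑one := trf_coe_eq _ _ fun x => by
        rw [hvx x, hone x]; simp
      rwa [hu1, hv1] at h2
  · rintro ⟨hpE, hqE⟩
    obtain ⟨m, hm, hmx⟩ := hmul.1 p g
    obtain ⟨m', hm', hmx'⟩ := hmul.1 q f
    obtain ⟨og, hog, hogx⟩ := hmul.1 one g
    obtain ⟨of, hof, hofx⟩ := hmul.1 one f
    have h1 := hmulc _ _ _ _ hpE (hrefl (↑g : TR n))
    have h2 := hmulc _ _ _ _ hqE (hrefl (↑f : TR n))
    rw [hm, hog] at h1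
    rw [hm', hof] at h2
    have hogg : (↑og : TR n) = ↑g := trf_coe_eq _ _ fun x => by
      rw [hogx x, hone x]; simp
    have hoff : (↑of : TR n) = ↑f := trf_coe_eq _ _ fun x => by
      rw [hofx x, hone x]; simp
    have hmm : (↑m : TR n) = ↑m' := trf_coe_eq _ _ fun x => by
      rw [hmx x, hmx' x, hp x, hq x]
      rcases le_total (f.1 x) (g.1 x) with h | h
      · rw [max_eq_right (by linarith), max_eq_left (by linarith)]; ring
      · rw [max_eq_left (by linarith), max_eq_right (by linarith)]; ring
    rw [hogg] at h1
    rw [hoff, ← hmm] at h2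
    exact htrans _ _ _ (hsym _ _ h2) h1
end

section
/- A congruence E on the tropical rational function semifield in n variables is finitely generated if and only if there exists a single element f such that E = ⟨(f, 0)⟩; moreover if E is proper, f can be chosen with f ≥ 0. -/
/-- The congruence generated by a relation `R`: the intersection of all congruences
containing `R`. -/
def conGenBy {α : Type*} (add mul : α → α → α) (R : α → α → Prop) : α → α → Prop :=
  fun a b => ∀ E : α → α → Prop, IsCongruence add mul E → (∀ x y, R x y → E x y) → E a b

/-!
A pair `(a, b)` of nonzero elements generates the same congruence as `(|a - b|, 0)`, where
`|a - b| = (a ⊙ b⁻¹) ⊕ (b ⊙ a⁻¹) ≥ 0`, and a pair with exactly one entry `-∞` generates the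
improper congruence, as does `(-∞, 0)`. Two pairs `(f, 0)`, `(g, 0)` with `f, g ≥ 0` generate the
same congruence as the single pair `(f ⊕ g, 0)`: one direction is compatibility with `⊕`, the
other the key fact `0 ≤ g ≤ f ⇒ (g, 0) ∈ ⟨(f, 0)⟩`. Induction on the number of generators.
-/

namespace IsCongruence

variable {α : Type*} {add mul : α → α → α} {C : α → α → Prop}

theorem refl (hC : IsCongruence add mul C) (a : α) : C a a := hC.1 a

theorem symm (hC : IsCongruence add mul C) {a b : α} : C a b → C b a := hC.2.1 a b

theorem trans (hC : IsCongruence add mul C) {a b c : α} : C a b → C b c → C a c :=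
  hC.2.2.1 a b c

theorem add_congr (hC : IsCongruence add mul C) {a b c d : α} :
    C a b → C c d → C (add a c) (add b d) :=
  hC.2.2.2.1 a b c d

theorem mul_congr (hC : IsCongruence add mul C) {a b c d : α} :
    C a b → C c d → C (mul a c) (mul b d) :=
  hC.2.2.2.2 a b c d

end IsCongruence

section ConGenBy

variable {α : Type*} {add mul : α → α → α}

theorem isCongruence_conGenBy (R : α → α → Prop) : IsCongruence add mul (conGenBy add mul R) :=
  ⟨fun a _ hC _ => hC.refl a,
   fun _ _ h C hC hR => hC.symm (h C hC hR),
   fun _ _ _ h₁ h₂ C hC hR => hC.trans (h₁ C hC hR) (h₂ C hC hR),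
   fun _ _ _ _ h₁ h₂ C hC hR => hC.add_congr (h₁ C hC hR) (h₂ C hC hR),
   fun _ _ _ _ h₁ h₂ C hC hR => hC.mul_congr (h₁ C hC hR) (h₂ C hC hR)⟩

theorem conGenBy_of_rel {R : α → α → Prop} {a b : α} (h : R a b) : conGenBy add mul R a b :=
  fun _ _ hR => hR a b h

theorem conGenBy_congr {R S : α → α → Prop}
    (h : ∀ C, IsCongruence add mul C → ((∀ a b, R a b → C a b) ↔ ∀ a b, S a b → C a b)) :
    conGenBy add mul R = conGenBy add mul S :=
  funext fun _ => funext fun _ => propext <|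
    forall_congr' fun C => forall_congr' fun hC => imp_congr_left (h C hC)

end ConGenBy

section Tropical

variable {n : ℕ} {add mul : TR n → TR n → TR n} {one : TRF n} {C : TR n → TR n → Prop}

theorem AddLaw.coe_eq (hadd : AddLaw n add) {f g h : TRF n}
    (hh : ∀ x, h.1 x = max (f.1 x) (g.1 x)) : add ↑f ↑g = ↑h := by
  obtain ⟨h', e, p⟩ := hadd.1 f g
  rw [e]
  exact congrArg _ (Subtype.ext (funext fun x => (p x).trans (hh x).symm))

theorem MulLaw.coe_eq (hmul : MulLaw n mul) {f g h : TRF n}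
    (hh : ∀ x, h.1 x = f.1 x + g.1 x) : mul ↑f ↑g = ↑h := by
  obtain ⟨h', e, p⟩ := hmul.1 f g
  rw [e]
  exact congrArg _ (Subtype.ext (funext fun x => (p x).trans (hh x).symm))

def TRF.inv (f : TRF n) : TRF n :=
  ⟨fun x => -f.1 x, by
    obtain ⟨f₁, f₂, h₁, h₂, hf⟩ := f.2
    exact ⟨f₂, f₁, h₂, h₁, fun x => by simp only [hf x, neg_sub]⟩⟩

theorem TRF.exists_abs_sub (hadd : AddLaw n add) (hmul : MulLaw n mul) (s t : TRF n) :
    ∃ w : TRF n, ∀ x, w.1 x = |s.1 x - t.1 x| := by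
  obtain ⟨u, -, hu⟩ := hmul.1 s (TRF.inv t)
  obtain ⟨v, -, hv⟩ := hmul.1 t (TRF.inv s)
  obtain ⟨w, -, hw⟩ := hadd.1 u v
  refine ⟨w, fun x => ?_⟩
  rw [hw, hu, hv, abs_eq_max_neg, neg_sub]
  rfl

/-- `-∞` has to be allowed: it is needed to generate the improper congruence, since every
`(f, 0)` with `f ≠ -∞` generates a proper one. -/
def IsNonnegOrBot (f : TR n) : Prop :=
  ∀ g : TRF n, f = ↑g → ∀ x, 0 ≤ g.1 x

namespace IsCongruence

theorem rel_of_bot_one (hmul : MulLaw n mul) (hone : ∀ x, one.1 x = 0)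
    (hC : IsCongruence add mul C) (h : C ⊥ ↑one) (a b : TR n) : C a b := by
  have hbot : ∀ a, C ⊥ a := by
    intro a
    induction a using WithBot.recBotCoe with
    | bot => exact hC.refl ⊥
    | coe t =>
      have := hC.mul_congr (hC.refl (t : TR n)) h
      rwa [hmul.2.1, hmul.coe_eq (h := t) (by simp [hone])] at this
  exact hC.trans (hC.symm (hbot a)) (hbot b)

theorem sub_rel_one (hmul : MulLaw n mul) (hone : ∀ x, one.1 x = 0)
    (hC : IsCongruence add mul C) {s t u : TRF n} (h : C ↑s ↑t)
    (hu : ∀ x, u.1 x = s.1 x - t.1 x) : C ↑u ↑one := by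
  have := hC.mul_congr h (hC.refl (TRF.inv t : TR n))
  rwa [hmul.coe_eq (h := u) (by simp [hu, TRF.inv, sub_eq_add_neg]),
    hmul.coe_eq (h := one) (by simp [hone, TRF.inv])] at this

theorem coe_bot_iff (hmul : MulLaw n mul) (hone : ∀ x, one.1 x = 0)
    (hC : IsCongruence add mul C) (s : TRF n) : C ↑s ⊥ ↔ C ⊥ ↑one := by
  refine ⟨fun h => ?_, fun h => hC.rel_of_bot_one hmul hone h _ _⟩
  have := hC.mul_congr h (hC.refl (TRF.inv s : TR n))
  rw [hmul.2.2, hmul.coe_eq (h := one) (by simp [hone, TRF.inv])] at this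
  exact hC.symm this

/-- From `w ~ 0` we get `w ⊙ s ~ s`; adding `t ≤ w ⊙ s` to both sides gives
`w ⊙ s ~ s ⊕ t`. -/
theorem rel_max_of_le (hadd : AddLaw n add) (hmul : MulLaw n mul) (hone : ∀ x, one.1 x = 0)
    (hC : IsCongruence add mul C) {w s t m : TRF n} (hw : C ↑w ↑one)
    (hle : ∀ x, t.1 x ≤ w.1 x + s.1 x) (hm : ∀ x, m.1 x = max (s.1 x) (t.1 x)) :
    C ↑s ↑m := by
  obtain ⟨ws, hws, hws'⟩ := hmul.1 w s
  have hmul_s : C ↑ws ↑s := by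
    have := hC.mul_congr hw (hC.refl (s : TR n))
    rwa [hws, hmul.coe_eq (h := s) (by simp [hone])] at this
  have hadd_t := hC.add_congr (hC.refl (t : TR n)) hmul_s
  rw [hadd.coe_eq (h := ws) (fun x => by rw [hws', max_eq_right (hle x)]),
    hadd.coe_eq (h := m) (fun x => by rw [hm, max_comm])] at hadd_t
  exact hC.trans (hC.symm hmul_s) hadd_t

theorem rel_one_of_nonneg_of_le (hadd : AddLaw n add) (hmul : MulLaw n mul)
    (hone : ∀ x, one.1 x = 0) (hC : IsCongruence add mul C) {f g : TRF n} (hf : C ↑f ↑one)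
    (hg : ∀ x, 0 ≤ g.1 x) (hgf : ∀ x, g.1 x ≤ f.1 x) : C ↑g ↑one :=
  hC.symm <| hC.rel_max_of_le hadd hmul hone hf (by simpa [hone] using hgf)
    (by simpa [hone] using hg)

theorem coe_coe_iff (hadd : AddLaw n add) (hmul : MulLaw n mul) (hone : ∀ x, one.1 x = 0)
    (hC : IsCongruence add mul C) {s t w : TRF n} (hw : ∀ x, w.1 x = |s.1 x - t.1 x|) :
    C ↑s ↑t ↔ C ↑w ↑one := by
  constructor
  · intro h
    obtain ⟨u, -, hu⟩ := hmul.1 s (TRF.inv t)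
    obtain ⟨v, -, hv⟩ := hmul.1 t (TRF.inv s)
    have hu1 := hC.sub_rel_one hmul hone h (u := u) (by simp [hu, TRF.inv, sub_eq_add_neg])
    have hv1 :=
      hC.sub_rel_one hmul hone (hC.symm h) (u := v) (by simp [hv, TRF.inv, sub_eq_add_neg])
    have := hC.add_congr hu1 hv1
    rwa [hadd.coe_eq (h := w) (by simp [hw, hu, hv, TRF.inv, abs_eq_max_neg, ← sub_eq_add_neg]),
      hadd.coe_eq (h := one) (by simp)] at this
  · intro h
    obtain ⟨m, -, hm⟩ := hadd.1 s t
    have hs := hC.rel_max_of_le hadd hmul hone h (t := t) (m := m)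
      (fun x => by linarith [hw x, neg_abs_le (s.1 x - t.1 x)]) hm
    have ht := hC.rel_max_of_le hadd hmul hone h (s := t) (t := s) (m := m)
      (fun x => by linarith [hw x, le_abs_self (s.1 x - t.1 x)]) (fun x => by rw [hm, max_comm])
    exact hC.trans hs (hC.symm ht)

end IsCongruence

theorem exists_nonnegOrBot_rel_one_iff_rel (hadd : AddLaw n add) (hmul : MulLaw n mul)
    (hone : ∀ x, one.1 x = 0) (a b : TR n) :
    ∃ f : TR n, IsNonnegOrBot f ∧
      ∀ C, IsCongruence add mul C → (C f ↑one ↔ C a b) := by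
  induction a using WithBot.recBotCoe with
  | bot =>
    induction b using WithBot.recBotCoe with
    | bot =>
      exact ⟨one, by simp [IsNonnegOrBot, hone], fun C hC => iff_of_true (hC.refl _) (hC.refl _)⟩
    | coe t =>
      refine ⟨⊥, by simp [IsNonnegOrBot], fun C hC => ?_⟩
      rw [← hC.coe_bot_iff hmul hone t]
      exact ⟨hC.symm, hC.symm⟩
  | coe s =>
    induction b using WithBot.recBotCoe with
    | bot => exact ⟨⊥, by simp [IsNonnegOrBot], fun C hC => (hC.coe_bot_iff hmul hone s).symm⟩
    | coe t =>
      obtain ⟨w, hw⟩ := TRF.exists_abs_sub hadd hmul s t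
      refine ⟨w, ?_, fun C hC => (hC.coe_coe_iff hadd hmul hone hw).symm⟩
      rintro g hg x
      rw [← WithBot.coe_inj.1 hg, hw]
      exact abs_nonneg _

theorem exists_nonnegOrBot_rel_one_iff_and (hadd : AddLaw n add) (hmul : MulLaw n mul)
    (hone : ∀ x, one.1 x = 0) {f₁ f₂ : TR n} (h₁ : IsNonnegOrBot f₁) (h₂ : IsNonnegOrBot f₂) :
    ∃ f : TR n, IsNonnegOrBot f ∧
      ∀ C, IsCongruence add mul C → (C f ↑one ↔ C f₁ ↑one ∧ C f₂ ↑one) := by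
  cases f₁ using WithBot.recBotCoe with
  | bot => exact ⟨⊥, h₁, fun C hC => ⟨fun h => ⟨h, hC.rel_of_bot_one hmul hone h _ _⟩, And.left⟩⟩
  | coe a =>
    cases f₂ using WithBot.recBotCoe with
    | bot =>
      exact ⟨⊥, h₂, fun C hC => ⟨fun h => ⟨hC.rel_of_bot_one hmul hone h _ _, h⟩, And.right⟩⟩
    | coe b =>
      obtain ⟨m, -, hm⟩ := hadd.1 a b
      refine ⟨m, ?_, fun C hC => ⟨fun h => ⟨?_, ?_⟩, fun ⟨ha, hb⟩ => ?_⟩⟩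
      · rintro g hg x
        rw [← WithBot.coe_inj.1 hg, hm]
        exact le_max_of_le_left (h₁ a rfl x)
      · exact hC.rel_one_of_nonneg_of_le hadd hmul hone h (h₁ a rfl)
          (fun x => hm x ▸ le_max_left _ _)
      · exact hC.rel_one_of_nonneg_of_le hadd hmul hone h (h₂ b rfl)
          (fun x => hm x ▸ le_max_right _ _)
      · have := hC.add_congr ha hb
        rwa [hadd.coe_eq (h := m) hm, hadd.coe_eq (h := one) (by simp)] at this

theorem exists_nonnegOrBot_rel_one_iff_forall (hadd : AddLaw n add) (hmul : MulLaw n mul)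
    (hone : ∀ x, one.1 x = 0) (k : ℕ) (p q : Fin k → TR n) :
    ∃ f : TR n, IsNonnegOrBot f ∧
      ∀ C, IsCongruence add mul C → (C f ↑one ↔ ∀ i, C (p i) (q i)) := by
  induction k with
  | zero =>
    exact ⟨one, by simp [IsNonnegOrBot, hone], fun C hC => iff_of_true (hC.refl _) finZeroElim⟩
  | succ k ih =>
    obtain ⟨f₁, h₁, hf₁⟩ := ih (fun i => p i.castSucc) (fun i => q i.castSucc)
    obtain ⟨f₂, h₂, hf₂⟩ :=
      exists_nonnegOrBot_rel_one_iff_rel hadd hmul hone (p (Fin.last k)) (q (Fin.last k))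
    obtain ⟨f, hf, hff⟩ := exists_nonnegOrBot_rel_one_iff_and hadd hmul hone h₁ h₂
    exact ⟨f, hf, fun C hC => by rw [hff C hC, hf₁ C hC, hf₂ C hC, Fin.forall_fin_succ']⟩

theorem exists_nonnegOrBot_conGenBy_eq (hadd : AddLaw n add) (hmul : MulLaw n mul)
    (hone : ∀ x, one.1 x = 0) (k : ℕ) (p q : Fin k → TR n) :
    ∃ f : TR n, IsNonnegOrBot f ∧
      conGenBy add mul (fun a b => ∃ i, a = p i ∧ b = q i) =
        conGenBy add mul (fun a b => a = f ∧ b = ↑one) := by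
  obtain ⟨f, hf, hC⟩ := exists_nonnegOrBot_rel_one_iff_forall hadd hmul hone k p q
  refine ⟨f, hf, conGenBy_congr fun C hC' => ⟨fun h => ?_, fun h => ?_⟩⟩
  · rintro a b ⟨rfl, rfl⟩
    exact (hC C hC').2 fun i => h _ _ ⟨i, rfl, rfl⟩
  · rintro a b ⟨i, rfl, rfl⟩
    exact (hC C hC').1 (h _ _ ⟨rfl, rfl⟩) i

end Tropical

theorem stmt10_general (n : ℕ) (add mul : TR n → TR n → TR n)
    (hadd : AddLaw n add) (hmul : MulLaw n mul)
    (one : TRF n) (hone : ∀ x, one.1 x = 0)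
    (E : TR n → TR n → Prop) :
    ((∃ (k : ℕ) (p q : Fin k → TR n),
        E = conGenBy add mul (fun a b => ∃ i, a = p i ∧ b = q i)) ↔
      (∃ f : TR n, E = conGenBy add mul (fun a b => a = f ∧ b = ↑one))) ∧
    ((∃ (k : ℕ) (p q : Fin k → TR n),
        E = conGenBy add mul (fun a b => ∃ i, a = p i ∧ b = q i)) →
      (¬ ∀ a b, E a b) →
      ∃ g : TRF n, (∀ x, 0 ≤ g.1 x) ∧
        E = conGenBy add mul (fun a b => a = ↑g ∧ b = ↑one)) := by
  refine ⟨⟨?_, ?_⟩, ?_⟩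
  · rintro ⟨k, p, q, rfl⟩
    obtain ⟨f, -, hf⟩ := exists_nonnegOrBot_conGenBy_eq hadd hmul hone k p q
    exact ⟨f, hf⟩
  · rintro ⟨f, rfl⟩
    exact ⟨1, fun _ => f, fun _ => one, by simp⟩
  · rintro ⟨k, p, q, rfl⟩ hproper
    obtain ⟨f, hf, heq⟩ := exists_nonnegOrBot_conGenBy_eq hadd hmul hone k p q
    induction f using WithBot.recBotCoe with
    | bot =>
      refine absurd ?_ hproper
      rw [heq]
      exact (isCongruence_conGenBy _).rel_of_bot_one hmul hone (conGenBy_of_rel ⟨rfl, rfl⟩)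
    | coe g => exact ⟨g, hf g rfl, heq⟩

/-- A congruence `E` on the tropical rational function semifield is
finitely generated iff it is generated by a single pair `(f, 0)` (where `0` denotes
the multiplicative identity `one`, the constant function `0`); moreover if `E` is
also proper, then `f` can be chosen with `f ≥ 0` (pointwise nonnegative). -/
theorem stmt10 (n : ℕ) (add mul : TR n → TR n → TR n)
    (hadd : AddLaw n add) (hmul : MulLaw n mul)
    (one : TRF n) (hone : ∀ x, one.1 x = 0)
    (E : TR n → TR n → Prop) (hE : IsCongruence add mul E) :
    ((∃ (k : ℕ) (p q : Fin k → TR n),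
        E = conGenBy add mul (fun a b => ∃ i, a = p i ∧ b = q i)) ↔
      (∃ f : TR n, E = conGenBy add mul (fun a b => a = f ∧ b = ↑one))) ∧
    ((∃ (k : ℕ) (p q : Fin k → TR n),
        E = conGenBy add mul (fun a b => ∃ i, a = p i ∧ b = q i)) →
      (¬ ∀ a b, E a b) →
      ∃ g : TRF n, (∀ x, 0 ≤ g.1 x) ∧
        E = conGenBy add mul (fun a b => a = ↑g ∧ b = ↑one)) :=
  stmt10_general n add mul hadd hmul one hone E
end

section
/- Let S be a commutative semiring that is partially ordered by x ≥ y iff x + y = x, let E be a congruence on S, and suppose f_1, …, f_m ∈ S satisfy f_i ≥ 1 (the multiplicative identity) for all i. Then the congruence generated by the pairs (f_1, 1), …, (f_m, 1) equals the congruence generated by the single pair (f_1 ⋯ f_m, 1), and also equals that generated by (f_1 + ⋯ + f_m, 1). -/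
/-!
Write `x ≥ y` for `x + y = x`. Each `f i` is congruent to `1` modulo the congruence generated by
the pairs `(f i, 1)`, hence so are `∏ f i` and `∑ f i` (the latter because `1 + 1 = 1`).
Conversely `1 ≤ f i ≤ ∏ f j` and `1 ≤ f i ≤ ∑ f j`, so the key fact with `k = 1` puts every
`(f i, 1)` into the congruence generated by `(∏ f j, 1)`, resp. `(∑ f j, 1)`.
-/

open Finset

section Order

variable {S : Type*} [CommSemiring S]

theorem mul_add_left_eq_of_add_one_eq {a b : S} (hb : b + 1 = b) : a * b + a = a * b :=
  calc a * b + a = a * (b + 1) := by ring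
    _ = a * b := by rw [hb]

theorem mul_add_one_eq {a b : S} (ha : a + 1 = a) (hb : b + 1 = b) : a * b + 1 = a * b :=
  calc a * b + 1 = a * b + a + 1 := by rw [mul_add_left_eq_of_add_one_eq hb]
    _ = a * b + a := by rw [add_assoc, ha]
    _ = a * b := mul_add_left_eq_of_add_one_eq hb

variable {ι : Type*} {s : Finset ι} {f : ι → S}

theorem prod_add_one_eq (h11 : (1 : S) + 1 = 1) (hf : ∀ i ∈ s, f i + 1 = f i) :
    (∏ i ∈ s, f i) + 1 = ∏ i ∈ s, f i :=
  prod_induction f (fun x => x + 1 = x) (fun _ _ => mul_add_one_eq) h11 hf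

theorem prod_add_eq_of_mem [DecidableEq ι] (h11 : (1 : S) + 1 = 1)
    (hf : ∀ i ∈ s, f i + 1 = f i) {i : ι} (hi : i ∈ s) :
    (∏ j ∈ s, f j) + f i = ∏ j ∈ s, f j := by
  rw [← mul_prod_erase s f hi]
  exact mul_add_left_eq_of_add_one_eq (prod_add_one_eq h11 fun j hj => hf j (mem_of_mem_erase hj))

theorem sum_add_eq_of_mem [DecidableEq ι] (hidem : ∀ x : S, x + x = x) {i : ι} (hi : i ∈ s) :
    (∑ j ∈ s, f j) + f i = ∑ j ∈ s, f j := by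
  rw [← add_sum_erase s f hi, add_right_comm, hidem]

end Order

namespace RingCon

variable {S : Type*} [CommSemiring S] (c : RingCon S) {ι : Type*} {s : Finset ι} {f : ι → S}

theorem prod_rel_one (h : ∀ i ∈ s, c (f i) 1) : c (∏ i ∈ s, f i) 1 := by
  simpa using c.finsetProd s h

theorem sum_rel_one (h11 : (1 : S) + 1 = 1) (hs : s.Nonempty) (h : ∀ i ∈ s, c (f i) 1) :
    c (∑ i ∈ s, f i) 1 :=
  sum_induction_nonempty f (fun x => c x 1)
    (fun _ _ ha hb => h11 ▸ c.add ha hb) hs h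

end RingCon

theorem ringConGen_eq_ringConGen_single_of_rel {S ι : Type*} [CommSemiring S] (f : ι → S) (g : S)
    (hg : ringConGen (fun a b => ∃ i, a = f i ∧ b = 1) g 1)
    (hf : ∀ i, ringConGen (fun a b => a = g ∧ b = 1) (f i) 1) :
    ringConGen (fun a b => ∃ i, a = f i ∧ b = 1) = ringConGen (fun a b => a = g ∧ b = 1) :=
  le_antisymm
    (RingCon.ringConGen_le.mpr fun _ _ ⟨i, hx, hy⟩ => hx ▸ hy ▸ hf i)
    (RingCon.ringConGen_le.mpr fun _ _ ⟨hx, hy⟩ => hx ▸ hy ▸ hg)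

/-- In an additively idempotent commutative semiring `S` (ordered by
`x ≥ y ↔ x + y = x`), assuming the key fact that `1 ≤ g ≤ f^k` implies
`(g, 1) ∈ ⟨(f, 1)⟩`, if `f 1, …, f m ≥ 1` then the congruence generated by the pairs
`(f i, 1)` equals the one generated by the single pair `(∏ f i, 1)` and also the one
generated by `(∑ f i, 1)`. -/
theorem stmt15 (S : Type*) [CommSemiring S]
    (hidem : ∀ x : S, x + x = x)
    (hkey : ∀ f g : S, g + 1 = g → ∀ k : ℕ, 0 < k → f ^ k + g = f ^ k →
      ringConGen (fun a b => a = f ∧ b = 1) g 1)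
    (m : ℕ) (hm : 0 < m) (f : Fin m → S) (hf : ∀ i, f i + 1 = f i) :
    ringConGen (fun a b => ∃ i, a = f i ∧ b = 1) =
      ringConGen (fun a b => a = ∏ i, f i ∧ b = 1) ∧
    ringConGen (fun a b => ∃ i, a = f i ∧ b = 1) =
      ringConGen (fun a b => a = ∑ i, f i ∧ b = 1) := by
  have hgen : ∀ i ∈ univ, ringConGen (fun a b => ∃ i, a = f i ∧ b = 1) (f i) 1 :=
    fun i _ => RingConGen.Rel.of _ _ ⟨i, rfl, rfl⟩
  constructor
  · refine ringConGen_eq_ringConGen_single_of_rel f _ (RingCon.prod_rel_one _ hgen) fun i =>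
      hkey _ _ (hf i) 1 one_pos ?_
    rw [pow_one]
    exact prod_add_eq_of_mem (hidem 1) (fun j _ => hf j) (mem_univ i)
  · refine ringConGen_eq_ringConGen_single_of_rel f _
      (RingCon.sum_rel_one _ (hidem 1) (univ_nonempty_iff.mpr ⟨⟨0, hm⟩⟩) hgen) fun i =>
      hkey _ _ (hf i) 1 one_pos ?_
    rw [pow_one]
    exact sum_add_eq_of_mem hidem (mem_univ i)
end
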